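/- Let q₀ be the unique real solution of (3/2)q + (1/2)q³ = −1/10, and let Ã₀ be the real 4×4 matrix with rows (0, 1, 0, 0), (−2 − (3/2)q₀², −0.3, 1, 0.3), (0, 0, 0, 1), (1, 0.3, −2, −0.6). Then every complex eigenvalue μ of Ã₀ satisfies Re μ < 0 and Im μ ≠ 0; i.e., the spectrum consists of two complex-conjugate pairs of eigenvalues with negative real parts, so the equilibrium is hyperbolic and asymptotically stable. -/

import Mathlib

/-! The characteristic polynomial of `Ã₀` depends on `q₀` only through `t = (3/2) q₀² ≥ 0`,
and it is positive on the real line (a sum of squares). For a root `x + iy` with `y ≠ 0`, the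
imaginary part determines `y²` in terms of `x` and `t`; eliminating `y²` from the real part
leaves a polynomial in `x` and `t` with positive coefficients, so no root has `x ≥ 0`. -/

open Matrix

/-- The linearization `Ã₀` of the Shaw–Pierre system with friction at its equilibrium
`x₀⁺ = (q₀, 0, q₀/2, 0)`. -/
noncomputable def Atilde (q0 : ℝ) : Matrix (Fin 4) (Fin 4) ℝ :=
  !![0, 1, 0, 0;
     -2 - (3 / 2) * q0 ^ 2, -0.3, 1, 0.3;
     0, 0, 0, 1;
     1, 0.3, -2, -0.6]

open Complex

noncomputable def charQuartic (t : ℝ) (μ : ℂ) : ℂ :=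
  μ ^ 4 + 9 / 10 * μ ^ 3 + (409 / 100 + t) * μ ^ 2 + (6 / 5 + 3 / 5 * t) * μ + (3 + 2 * t)

lemma det_scalar_sub_Atilde (q0 : ℝ) (μ : ℂ) :
    (scalar (Fin 4) μ - (Atilde q0).map ofReal).det = charQuartic (3 / 2 * q0 ^ 2) μ := by
  simp [Atilde, charQuartic, det_succ_row_zero, Fin.sum_univ_succ, Fin.succAbove]
  norm_num
  ring

lemma charQuartic_re (t : ℝ) (μ : ℂ) :
    (charQuartic t μ).re =
      μ.re ^ 4 - 6 * μ.re ^ 2 * μ.im ^ 2 + μ.im ^ 4 + 9 / 10 * (μ.re ^ 3 - 3 * μ.re * μ.im ^ 2)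
        + (409 / 100 + t) * (μ.re ^ 2 - μ.im ^ 2) + (6 / 5 + 3 / 5 * t) * μ.re + (3 + 2 * t) := by
  simp only [charQuartic, pow_succ, pow_zero, one_mul, add_re, mul_re, mul_im, div_ofNat_re,
    re_ofNat, div_ofNat_im, im_ofNat, zero_div, zero_mul, sub_zero, ofReal_re, ofReal_im,
    add_im, add_zero, mul_zero]
  ring

lemma charQuartic_im (t : ℝ) (μ : ℂ) :
    (charQuartic t μ).im = μ.im * (4 * μ.re ^ 3 - 4 * μ.re * μ.im ^ 2
        + 9 / 10 * (3 * μ.re ^ 2 - μ.im ^ 2) + 2 * (409 / 100 + t) * μ.re + (6 / 5 + 3 / 5 * t)) := by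
  simp only [charQuartic, pow_succ, pow_zero, one_mul, add_im, mul_im, mul_re, div_ofNat_re,
    re_ofNat, div_ofNat_im, im_ofNat, zero_div, zero_mul, add_zero, add_re, ofReal_re, ofReal_im,
    mul_zero, sub_zero]
  ring

lemma charQuartic_ne_zero_of_im_eq_zero {t : ℝ} (ht : 0 ≤ t) {μ : ℂ} (hμ : μ.im = 0) :
    charQuartic t μ ≠ 0 := by
  intro h
  have hre := congrArg re h
  rw [charQuartic_re, hμ, zero_re] at hre
  nlinarith [sq_nonneg (μ.re ^ 2 + 9 / 20 * μ.re), sq_nonneg (μ.re + 1 / 6), sq_nonneg μ.re,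
    mul_nonneg ht (sq_nonneg (μ.re + 3 / 10))]

lemma charQuartic_ne_zero_of_re_nonneg {t : ℝ} (ht : 0 ≤ t) {μ : ℂ} (hμ : 0 ≤ μ.re) :
    charQuartic t μ ≠ 0 := by
  intro h
  by_cases him : μ.im = 0
  · exact charQuartic_ne_zero_of_im_eq_zero ht him h
  set x := μ.re
  set y := μ.im
  have hR : (charQuartic t μ).re = 0 := by rw [h, zero_re]
  have hI : (charQuartic t μ).im = 0 := by rw [h, zero_im]
  rw [charQuartic_re] at hR
  rw [charQuartic_im, mul_eq_zero, or_iff_right him] at hI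
  -- `hI` reads `(4x + 9/10) y² = 4x³ + 27/10 x² + 2(409/100 + t) x + 6/5 + 3/5 t`; the
  -- coefficients below substitute it into `(4x + 9/10)² · hR`.
  have hres : 342 / 625 + 1143 / 5000 * t + 9 / 50 * t ^ 2 + 522729 / 50000 * x
      + 162 / 125 * x * t + 9 / 5 * x * t ^ 2 + 124339 / 2500 * x ^ 2 + 234 / 25 * x ^ 2 * t
      + 4 * x ^ 2 * t ^ 2 + 15453 / 125 * x ^ 3 + 144 / 5 * x ^ 3 * t + 4244 / 25 * x ^ 4
      + 32 * x ^ 4 * t + 432 / 5 * x ^ 5 + 64 * x ^ 6 = 0 := by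
    linear_combination -(4 * x + 9 / 10) ^ 2 * hR - ((4 * x + 9 / 10) * y ^ 2
      + (6 / 5 + 3 / 5 * t + 409 / 50 * x + 2 * x * t + 27 / 10 * x ^ 2 + 4 * x ^ 3)
      + (-409 / 100 - t - 27 / 10 * x - 6 * x ^ 2) * (4 * x + 9 / 10)) * hI
  exact absurd hres (by positivity)

theorem Atilde_spectrum_stable_general (q0 : ℝ) :
    ∀ μ ∈ spectrum ℂ ((Atilde q0).map (Complex.ofReal)), μ.re < 0 ∧ μ.im ≠ 0 := by
  intro μ hμ
  rw [mem_spectrum_iff_isRoot_charpoly, Polynomial.IsRoot.def, eval_charpoly,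
    det_scalar_sub_Atilde] at hμ
  have ht : 0 ≤ 3 / 2 * q0 ^ 2 := by positivity
  exact ⟨not_le.mp fun hre ↦ charQuartic_ne_zero_of_re_nonneg ht hre hμ,
    fun him ↦ charQuartic_ne_zero_of_im_eq_zero ht him hμ⟩

/-- For `δ = 1/10`, with `q₀` the unique real solution of `(3/2)q + (1/2)q³ = −1/10`,
every complex eigenvalue `μ` of `Ã₀` satisfies `Re μ < 0` and `Im μ ≠ 0`: the spectrum
consists of complex-conjugate pairs with negative real parts, so the equilibrium is
hyperbolic and asymptotically stable. -/
theorem Atilde_spectrum_stable (q0 : ℝ)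
    (hq : (3 / 2) * q0 + (1 / 2) * q0 ^ 3 = -(1 / 10)) :
    ∀ μ ∈ spectrum ℂ ((Atilde q0).map (Complex.ofReal)), μ.re < 0 ∧ μ.im ≠ 0 :=
  Atilde_spectrum_stable_general q0
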